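/- For all natural numbers n ≠ m, there exists a Veltman frame satisfying the frame condition F^n but not F^m. Consequently the logics IL + R^n for distinct n are pairwise incomparable: IL + R^n does not derive R^m. -/

import Mathlib

/-- Formulas of interpretability logic: propositional variables, ⊥, →, □, ▷. -/
inductive ILForm : Type
  | var : ℕ → ILForm
  | bot : ILForm
  | impl : ILForm → ILForm → ILForm
  | box : ILForm → ILForm
  | rhd : ILForm → ILForm → ILForm
  deriving DecidableEq

namespace ILForm

def neg (A : ILForm) : ILForm := impl A bot
def top : ILForm := neg bot
def conj (A B : ILForm) : ILForm := neg (impl A (neg B))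
def disj (A B : ILForm) : ILForm := impl (neg A) B
def dia (A : ILForm) : ILForm := neg (box (neg A))

end ILForm

infixr:30 " ⟹ " => ILForm.impl
infixl:65 " ⋀ " => ILForm.conj
infixl:64 " ⋁ " => ILForm.disj
infix:50 " ▷ " => ILForm.rhd
prefix:70 "□" => ILForm.box
prefix:70 "◇" => ILForm.dia
prefix:70 "∼" => ILForm.neg

/-- Propositional evaluation of a formula, treating boxed and ▷-formulas
(and variables) as atoms evaluated by `g`.  A formula is an instance of a
propositional tautology iff it evaluates to `true` under every such `g`. -/
def ILForm.evalProp (g : ILForm → Bool) : ILForm → Bool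
  | .bot => false
  | .impl a b => !(ILForm.evalProp g a) || ILForm.evalProp g b
  | f => g f

/-- Hilbert-style provability in the interpretability logic IL extended with
an additional set `Ax` of axioms. -/
inductive ILProv (Ax : Set ILForm) : ILForm → Prop
  | ax {A : ILForm} : A ∈ Ax → ILProv Ax A
  | taut {A : ILForm} : (∀ g : ILForm → Bool, A.evalProp g = true) → ILProv Ax A
  | L1 (A B : ILForm) : ILProv Ax ((□(A ⟹ B)) ⟹ ((□A) ⟹ (□B)))
  | L2 (A : ILForm) : ILProv Ax ((□A) ⟹ (□□A))
  | L3 (A : ILForm) : ILProv Ax ((□((□A) ⟹ A)) ⟹ (□A))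
  | J1 (A B : ILForm) : ILProv Ax ((□(A ⟹ B)) ⟹ (A ▷ B))
  | J2 (A B C : ILForm) : ILProv Ax (((A ▷ B) ⋀ (B ▷ C)) ⟹ (A ▷ C))
  | J3 (A B C : ILForm) : ILProv Ax (((A ▷ C) ⋀ (B ▷ C)) ⟹ ((A ⋁ B) ▷ C))
  | J4 (A B : ILForm) : ILProv Ax ((A ▷ B) ⟹ ((◇A) ⟹ (◇B)))
  | J5 (A : ILForm) : ILProv Ax ((◇A) ▷ A)
  | mp {A B : ILForm} : ILProv Ax (A ⟹ B) → ILProv Ax A → ILProv Ax B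
  | nec {A : ILForm} : ILProv Ax A → ILProv Ax (□A)

/-- Substitution of formulas for propositional variables. -/
def ILForm.substVar (σ : ℕ → ILForm) : ILForm → ILForm
  | .var n => σ n
  | .bot => .bot
  | .impl a b => .impl (ILForm.substVar σ a) (ILForm.substVar σ b)
  | .box a => .box (ILForm.substVar σ a)
  | .rhd a b => .rhd (ILForm.substVar σ a) (ILForm.substVar σ b)

/-- All substitution instances of a modal scheme. -/
def instancesOf (A : ILForm) : Set ILForm := {B | ∃ σ : ℕ → ILForm, B = ILForm.substVar σ A}

/-- Helper for simultaneous replacement of subformula occurrences. -/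
def ILForm.hit (ps : List (ILForm × ILForm)) (f : ILForm) : Option ILForm :=
  (ps.find? fun pq => decide (pq.1 = f)).map (·.2)

/-- Simultaneous replacement of (outermost) occurrences of the patterns
`p` by the corresponding `q`, for `(p,q)` in the list `ps`. -/
def ILForm.replL (ps : List (ILForm × ILForm)) : ILForm → ILForm
  | .var n => (ILForm.hit ps (.var n)).getD (.var n)
  | .bot => (ILForm.hit ps .bot).getD .bot
  | .impl a b =>
      (ILForm.hit ps (.impl a b)).getD (.impl (ILForm.replL ps a) (ILForm.replL ps b))
  | .box a => (ILForm.hit ps (.box a)).getD (.box (ILForm.replL ps a))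
  | .rhd a b =>
      (ILForm.hit ps (.rhd a b)).getD (.rhd (ILForm.replL ps a) (ILForm.replL ps b))

/-- The placeholder variables `A_n`, `B_n`, `C_n`, `E_n`. -/
def Av (n : ℕ) : ILForm := .var (4*n)
def Bv (n : ℕ) : ILForm := .var (4*n+1)
def Cv (n : ℕ) : ILForm := .var (4*n+2)
def Ev (n : ℕ) : ILForm := .var (4*n+3)

/-- The slim series `R_n`, defined by the substitutions of the paper:
`R_0 := A_0▷B_0 → ¬(A_0▷¬C_0) ▷ B_0∧□C_0`;
`R_{2n+1} := R_{2n}[¬(A_n▷¬C_n)/¬(A_n▷¬C_n)∧(E_{n+1}▷◇A_{n+1});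
                    B_n∧□C_n/B_n∧□C_n∧(E_{n+1}▷A_{n+1})]`;
`R_{2n+2} := R_{2n+1}[B_n/B_n∧(A_{n+1}▷B_{n+1}); ◇A_{n+1}/¬(A_{n+1}▷¬C_{n+1});
     (E_{n+1}▷A_{n+1})/(E_{n+1}▷A_{n+1})∧(E_{n+1}▷B_{n+1}∧□C_{n+1})]`. -/
def Rser : ℕ → ILForm
  | 0 => (Av 0 ▷ Bv 0) ⟹ ((∼(Av 0 ▷ (∼(Cv 0)))) ▷ ((Bv 0) ⋀ (□(Cv 0))))
  | n+1 =>
    let k := n / 2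
    if n % 2 = 0 then
      ILForm.replL
        [ (∼(Av k ▷ (∼(Cv k))), (∼(Av k ▷ (∼(Cv k)))) ⋀ (Ev (k+1) ▷ (◇(Av (k+1))))),
          ((Bv k) ⋀ (□(Cv k)), ((Bv k) ⋀ (□(Cv k))) ⋀ (Ev (k+1) ▷ Av (k+1))) ]
        (Rser n)
    else
      ILForm.replL
        [ (Bv k, (Bv k) ⋀ (Av (k+1) ▷ Bv (k+1))),
          (◇(Av (k+1)), ∼(Av (k+1) ▷ (∼(Cv (k+1))))),
          (Ev (k+1) ▷ Av (k+1),
            (Ev (k+1) ▷ Av (k+1)) ⋀ (Ev (k+1) ▷ ((Bv (k+1)) ⋀ (□(Cv (k+1)))))) ]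
        (Rser n)

/-- The formulas `X_n` of the well-behaved subhierarchy. -/
def Xt (A B : ℕ → ILForm) : ℕ → ILForm
  | 0 => A 0 ▷ B 0
  | n+1 => A (n+1) ▷ ((B (n+1)) ⋀ (Xt A B n))

/-- The formulas `Y_n` of the well-behaved subhierarchy. -/
def Yt (A C E : ℕ → ILForm) : ℕ → ILForm
  | 0 => ∼(A 0 ▷ (∼(C 0)))
  | n+1 => (∼(A (n+1) ▷ (∼(C (n+1))))) ⋀ (E (n+1) ▷ (Yt A C E n))

/-- The formulas `Z_n` of the well-behaved subhierarchy. -/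
def Zt (A B C E : ℕ → ILForm) : ℕ → ILForm
  | 0 => (B 0) ⋀ (□(C 0))
  | n+1 => (((B (n+1)) ⋀ (Xt A B n)) ⋀ (□(C (n+1)))) ⋀
             ((E (n+1) ▷ A n) ⋀ (E (n+1) ▷ (Zt A B C E n)))

/-- The principles `R̃_n = X_n → Y_n ▷ Z_n`. -/
def Rtilde (A B C E : ℕ → ILForm) (n : ℕ) : ILForm :=
  (Xt A B n) ⟹ ((Yt A C E n) ▷ (Zt A B C E n))

/-- `X_{k-1}`, with the convention `X_{-1} = ⊤`. -/
def Xminus (A B : ℕ → ILForm) : ℕ → ILForm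
  | 0 => ILForm.top
  | n+1 => Xt A B n

/-- `A_{k-1}`, with the convention `A_{-1} = ⊤`. -/
def Aminus (A : ℕ → ILForm) : ℕ → ILForm
  | 0 => ILForm.top
  | n+1 => A n

/-- `Z_{k-1}`, with the convention `Z_{-1} = ⊤`. -/
def Zminus (A B C E : ℕ → ILForm) : ℕ → ILForm
  | 0 => ILForm.top
  | n+1 => Zt A B C E n

/-- Veltman frames. -/
structure Veltman where
  W : Type
  ne : Nonempty W
  R : W → W → Prop
  S : W → W → W → Prop
  R_trans : ∀ {x y z}, R x y → R y z → R x z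
  R_cwf : WellFounded (fun x y => R y x)
  S_dom : ∀ {x y z}, S x y z → R x y ∧ R x z
  S_refl : ∀ {x y}, R x y → S x y y
  S_trans : ∀ {x y z u}, S x y z → S x z u → S x y u
  R_sub_S : ∀ {x y z}, R x y → R y z → S x y z

/-- Forcing in a Veltman model. -/
def force (F : Veltman) (V : ℕ → F.W → Prop) : ILForm → F.W → Prop
  | .var n => fun w => V n w
  | .bot => fun _ => False
  | .impl a b => fun w => force F V a w → force F V b w
  | .box a => fun w => ∀ v, F.R w v → force F V a v
  | .rhd a b => fun w => ∀ v, F.R w v → force F V a v →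
      ∃ u, F.S w v u ∧ force F V b u

/-- A formula is valid on a frame if it is forced at every world under every valuation. -/
def valid (F : Veltman) (A : ILForm) : Prop := ∀ (V : ℕ → F.W → Prop) (w : F.W), force F V A w

/-- The `C`-assuring successor relation `x R^C_⊩ y`. -/
def RC (F : Veltman) (V : ℕ → F.W → Prop) (C : ILForm) (x y : F.W) : Prop :=
  F.R x y ∧ force F V C y ∧ ∀ z, F.S x y z → force F V C z

/-- The ternary relations `G_n` on a Veltman frame. -/
def G (F : Veltman) : ℕ → F.W → F.W → F.W → Prop
  | 0 => fun x y z => ∀ u, F.R z u → F.S x y u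
  | n+1 => fun x y z => ∀ u, F.R z u → F.S x y u ∧ ∀ v, F.S x u v → G F n z u v

/-- The frame conditions `F_n` of the slim hierarchy. -/
def Fcond (F : Veltman) (n : ℕ) : Prop :=
  ∀ w x y z, F.R w x → F.R x y → F.S w y z → G F n x y z

/-- The quaternary relations `B_n` on a Veltman frame. -/
def Bq (F : Veltman) : ℕ → F.W → F.W → F.W → F.W → Prop
  | 0 => fun x1 x0 y0 y1 => F.R x1 x0 ∧ F.R x0 y0 ∧ F.S x1 y0 y1
  | n+1 => fun x' x0 y0 y' => ∃ xn yn, F.R x' xn ∧ Bq F n xn x0 y0 yn ∧ F.S x' yn y'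

/-- The formulas `U_n` of the broad series (with `U_0 := ⊤`, unused). -/
def Ubr (C : ILForm) (D : ℕ → ILForm) : ℕ → ILForm
  | 0 => ILForm.top
  | 1 => ◇(∼(D 1 ▷ (∼C)))
  | n+2 => ◇(((D (n+1)) ▷ (D (n+2))) ⋀ (Ubr C D (n+1)))

/-- The frame conditions `F^n` of the broad series. -/
def FbroadCond (F : Veltman) (n : ℕ) : Prop :=
  ∀ x1 x0 y0 y1, Bq F n x1 x0 y0 y1 → ∀ u, F.R y1 u → F.S x0 y0 u

/-- The principles `R^n` of the broad series. -/
def Rbroad (A B C : ILForm) (D : ℕ → ILForm) : ℕ → ILForm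
  | 0 => (A ▷ B) ⟹ ((∼(A ▷ (∼C))) ▷ (B ⋀ (□C)))
  | n+1 => (A ▷ B) ⟹ (((Ubr C D (n+1)) ⋀ (D (n+1) ▷ A)) ▷ (B ⋀ (□C)))

/-!
`IL + R^n` is sound on every frame satisfying `F^n`: unravelling `U_n` yields a `B_n`-chain, and
`F^n` applied to it supplies the `□C` part of the required witness. So it suffices to build, for
each `m`, a frame satisfying `F^n` for all `n ≠ m` on which `R^m` fails.

The worlds are `X 0, …, X (m+1)`, `Y 0, …, Y (m+1)` and `U`. Apart from the arrows forced by the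
Veltman axioms, `S` only has the steps `Y j ↦ Y (j+1)` (and `X j ↦ Y (j+1)`) at `X (j+1)`.
The staircase `X 0 R Y 0 ↦ Y 1 ↦ ⋯ ↦ Y (m+1) R U` is a `B_m`-chain refuting `F^m`, as `X 0`
does not see `U`. Conversely, a `B_n`-chain from `(X 0, Y 0)` climbs at most one `Y` per step
while its `X`-end lies between `X (n+1)` and `X (m+1)`, so it reaches `Y (m+1)` only if `n = m`;
every other `B_n`-chain ends in a world whose successors are `S_{x0}`-reachable from `y0` already.
-/

section Semantics

variable {F : Veltman} {V : ℕ → F.W → Prop}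

theorem force_neg {A : ILForm} {w : F.W} : force F V (∼A) w ↔ ¬ force F V A w := Iff.rfl

theorem force_conj {A B : ILForm} {w : F.W} :
    force F V (A ⋀ B) w ↔ force F V A w ∧ force F V B w :=
  Classical.not_imp.trans (and_congr_right fun _ => not_not)

theorem force_dia {A : ILForm} {w : F.W} :
    force F V (◇A) w ↔ ∃ v, F.R w v ∧ force F V A v := by
  simp [ILForm.dia, ILForm.neg, force]

theorem not_force_rhd {A B : ILForm} {w : F.W} :
    ¬ force F V (A ▷ B) w ↔
      ∃ v, F.R w v ∧ force F V A v ∧ ∀ u, F.S w v u → ¬ force F V B u := by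
  simp [force]

theorem force_substVar (σ : ℕ → ILForm) (A : ILForm) (w : F.W) :
    force F V (A.substVar σ) w ↔ force F (fun n u => force F V (σ n) u) A w := by
  induction A generalizing w with
  | var n => rfl
  | bot => rfl
  | impl a b iha ihb => exact imp_congr (iha w) (ihb w)
  | box a iha => exact forall_congr' fun v => imp_congr Iff.rfl (iha v)
  | rhd a b iha ihb =>
      exact forall_congr' fun v => imp_congr Iff.rfl <| imp_congr (iha v) <|
        exists_congr fun u => and_congr Iff.rfl (ihb u)

theorem force_of_evalProp {A : ILForm} (h : ∀ g : ILForm → Bool, A.evalProp g = true)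
    (w : F.W) : force F V A w := by
  classical
  let g : ILForm → Bool := fun B => decide (force F V B w)
  have hg : ∀ B : ILForm, B.evalProp g = g B := by
    intro B
    induction B with
    | impl a b iha ihb => simp [ILForm.evalProp, g, force, iha, ihb, imp_iff_not_or]
    | bot => exact (decide_eq_false (p := force F V .bot w) not_false).symm
    | _ => rfl
  simpa [hg, g] using h g

theorem valid_L3 (A : ILForm) : valid F ((□((□A) ⟹ A)) ⟹ (□A)) := by
  intro V w hLob v
  induction v using F.R_cwf.induction with
  | _ v ih => exact fun hwv => hLob v hwv fun u hvu => ih u hvu (F.R_trans hwv hvu)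

theorem valid_of_ILProv {Ax : Set ILForm} {A : ILForm}
    (h : ILProv Ax A) (hAx : ∀ B ∈ Ax, valid F B) : valid F A := by
  induction h with
  | ax hB => exact hAx _ hB
  | taut ht => exact fun V w => force_of_evalProp ht w
  | L1 A B => exact fun V w h1 h2 v hv => h1 v hv (h2 v hv)
  | L2 A => exact fun V w h1 v hv u hu => h1 u (F.R_trans hv hu)
  | L3 A => exact valid_L3 A
  | J1 A B => exact fun V w h1 v hv ha => ⟨v, F.S_refl hv, h1 v hv ha⟩
  | J2 A B C =>
      intro V w h1 v hv ha
      rw [force_conj] at h1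
      obtain ⟨u1, hs1, hb⟩ := h1.1 v hv ha
      obtain ⟨u2, hs2, hc⟩ := h1.2 u1 (F.S_dom hs1).2 hb
      exact ⟨u2, F.S_trans hs1 hs2, hc⟩
  | J3 A B C =>
      intro V w h1 v hv hab
      rw [force_conj] at h1
      by_cases hA : force F V A v
      · exact h1.1 v hv hA
      · exact h1.2 v hv (hab hA)
  | J4 A B =>
      intro V w h1 h2
      rw [force_dia] at h2 ⊢
      obtain ⟨v, hv, ha⟩ := h2
      obtain ⟨u, hs, hb⟩ := h1 v hv ha
      exact ⟨u, (F.S_dom hs).2, hb⟩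
  | J5 A =>
      intro V w v hv hd
      obtain ⟨z, hz, ha⟩ := force_dia.1 hd
      exact ⟨z, F.R_sub_S hv hz, ha⟩
  | mp _ _ ih1 ih2 => exact fun V w => ih1 V w (ih2 V w)
  | nec _ ih => exact fun V w v _ => ih V v

theorem valid_of_mem_instancesOf {A B : ILForm} (hA : valid F A) (hB : B ∈ instancesOf A) :
    valid F B := by
  obtain ⟨σ, rfl⟩ := hB
  exact fun V w => (force_substVar σ A w).2 (hA _ w)

end Semantics

section Broad

variable {F : Veltman}

theorem Bq.rel_inner {n : ℕ} {x' x0 y0 y' : F.W} (h : Bq F n x' x0 y0 y') : F.R x0 y0 := by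
  induction n generalizing x' y' with
  | zero => exact h.2.1
  | succ k ih =>
      obtain ⟨_, _, -, hB, -⟩ := h
      exact ih hB

theorem Bq.induction_on {x0 y0 : F.W} (P : ℕ → F.W → F.W → Prop) (base : P 0 x0 y0)
    (step : ∀ k x y x' y', P k x y → F.R x' x → F.S x' y y' → P (k+1) x' y')
    {n : ℕ} {x' y' : F.W} (h : Bq F n x' x0 y0 y') : P (n+1) x' y' := by
  induction n generalizing x' y' with
  | zero => exact step 0 _ _ _ _ base h.1 h.2.2
  | succ k ih =>
      obtain ⟨xk, yk, hR, hB, hS⟩ := h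
      exact step _ _ _ _ _ (ih hB) hR hS

variable {V : ℕ → F.W → Prop}

theorem exists_Bq_of_force_Ubr (C : ILForm) (D : ℕ → ILForm) (k : ℕ) {x : F.W}
    (hx : force F V (Ubr C D (k+1)) x) :
    ∃ x0 y0 y, F.R x0 y0 ∧ (∀ z, F.S x0 y0 z → force F V C z) ∧
      force F V (D (k+1)) y ∧ F.R x y ∧ ∀ y', F.S x y y' → Bq F k x x0 y0 y' := by
  induction k generalizing x with
  | zero =>
      obtain ⟨x0, hxx0, hx0⟩ := force_dia.1 hx
      obtain ⟨y0, hx0y0, hD, hC⟩ := not_force_rhd.1 hx0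
      exact ⟨x0, y0, y0, hx0y0, fun z hz => not_not.1 (hC z hz), hD,
        F.R_trans hxx0 hx0y0, fun y' hs => ⟨hxx0, hx0y0, hs⟩⟩
  | succ k ih =>
      obtain ⟨x', hxx', hx'⟩ := force_dia.1 hx
      obtain ⟨hDD, hU⟩ := force_conj.1 hx'
      obtain ⟨x0, y0, y, hx0y0, hC, hD, hx'y, hB⟩ := ih hU
      obtain ⟨y', hs, hD'⟩ := hDD y hx'y hD
      exact ⟨x0, y0, y', hx0y0, hC, hD', F.R_trans hxx' (F.S_dom hs).2,
        fun y'' hs' => ⟨x', y', hxx', hB y' hs, hs'⟩⟩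

theorem valid_Rbroad {n : ℕ} (h : FbroadCond F n) (A B C : ILForm) (D : ℕ → ILForm) :
    valid F (Rbroad A B C D n) := by
  cases n with
  | zero =>
      intro V w hAB y hwy hy
      obtain ⟨v, hyv, hA, hC⟩ := not_force_rhd.1 hy
      obtain ⟨b, hsb, hB⟩ := hAB v (F.R_trans hwy hyv) hA
      exact ⟨b, F.S_trans (F.R_sub_S hwy hyv) hsb, force_conj.2
        ⟨hB, fun u hbu => not_not.1 (hC u (h w y v b ⟨hwy, hyv, hsb⟩ u hbu))⟩⟩
  | succ k =>
      intro V w hAB xk hwxk hxk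
      obtain ⟨hU, hDA⟩ := force_conj.1 hxk
      obtain ⟨x0, y0, y, hx0y0, hC, hD, hxky, hB⟩ := exists_Bq_of_force_Ubr C D k hU
      obtain ⟨yA, hsA, hA⟩ := hDA y hxky hD
      have hxkyA := (F.S_dom hsA).2
      obtain ⟨yB, hsB, hB'⟩ := hAB yA (F.R_trans hwxk hxkyA) hA
      exact ⟨yB, F.S_trans (F.R_sub_S hwxk hxkyA) hsB, force_conj.2
        ⟨hB', fun u hu => hC u (h w x0 y0 yB ⟨xk, yA, hwxk, hB yA hsA, hsB⟩ u hu)⟩⟩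

end Broad

namespace SepFrame

inductive World : Type
  | X : ℕ → World
  | Y : ℕ → World
  | U : World

open World

-- Only `X j` with `j ≤ m+1` take part in the frame; the others are isolated.
def R (m : ℕ) : World → World → Prop
  | X j, X i => i < j ∧ j ≤ m+1
  | X j, Y i => i ≤ j ∧ j ≤ m+1
  | X j, U => 1 ≤ j ∧ j ≤ m+1
  | Y i, U => i = m+1
  | _, _ => False

def extraS : World → World → World → Prop
  | X a, Y j, Y b => a = j+1 ∧ b = a
  | X a, X j, Y b => a = j+1 ∧ b = a
  | _, _, _ => False

def S (m : ℕ) (x y z : World) : Prop :=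
  R m x y ∧ R m x z ∧ (y = z ∨ R m y z ∨ z = U ∨ extraS x y z)

def rank : World → ℕ
  | X j => j + 2
  | Y _ => 1
  | U => 0

variable {m : ℕ}

theorem R_trans {x y z : World} (hxy : R m x y) (hyz : R m y z) : R m x z := by
  cases x <;> cases y <;> cases z <;> simp only [R] at * <;> omega

theorem rank_lt_of_R {x y : World} (h : R m x y) : rank y < rank x := by
  cases x <;> cases y <;> simp only [R, rank] at * <;> omega

theorem S_trans {x y z u : World} (hyz : S m x y z) (hzu : S m x z u) : S m x y u := by
  cases x <;> cases y <;> cases z <;> cases u <;> simp [S, R, extraS] at * <;> omega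

def frame (m : ℕ) : Veltman where
  W := World
  ne := ⟨U⟩
  R := R m
  S := S m
  R_trans := R_trans
  R_cwf := Subrelation.wf rank_lt_of_R (InvImage.wf rank wellFounded_lt)
  S_dom h := ⟨h.1, h.2.1⟩
  S_refl h := ⟨h, h, Or.inl rfl⟩
  S_trans := S_trans
  R_sub_S h1 h2 := ⟨h1, R_trans h1 h2, Or.inr (Or.inl h2)⟩

theorem S_exc {j : ℕ} (hj : j ≤ m) : S m (X (j+1)) (Y j) (Y (j+1)) := by
  simp [S, R, extraS]; omega

theorem Bq_staircase : ∀ j ≤ m, Bq (frame m) j (X (j+1)) (X 0) (Y 0) (Y (j+1))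
  | 0, _ => ⟨by simp [frame, R], by simp [frame, R], S_exc (Nat.zero_le m)⟩
  | j+1, hj =>
      ⟨X (j+1), Y (j+1), by simp [frame, R]; omega, Bq_staircase j (by omega), S_exc hj⟩

theorem not_FbroadCond_self : ¬ FbroadCond (frame m) m := fun h =>
  Nat.not_succ_le_zero 0 (h _ _ _ _ (Bq_staircase m le_rfl) U rfl).2.1.1

theorem R_or_eq_U_of_Bq {n : ℕ} {x' x0 y0 y' u : World} (h : Bq (frame m) n x' x0 y0 y')
    (hu : R m y' u) : R m y0 u ∨ u = U := by
  refine Bq.induction_on (fun _ _ y => ∀ u, R m y u → R m y0 u ∨ u = U) (fun u h => .inl h)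
    ?_ h u hu
  rintro - - y x y' hy - ⟨-, -, rfl | hyy' | rfl | hexc⟩ u hu
  · exact hy u hu
  · exact hy u (R_trans hyy' hu)
  · cases u <;> simp [R] at hu
  · cases x <;> cases y <;> cases y' <;> cases u <;> simp [extraS, R] at hexc hu ⊢

theorem eq_of_Bq_X_zero {n : ℕ} {x' y' : World} (h : Bq (frame m) n x' (X 0) (Y 0) y')
    (hu : R m y' U) : n = m := by
  have key := Bq.induction_on (F := frame m)
    (fun k x y => ∃ a, x = X a ∧ k ≤ a ∧ a ≤ m+1 ∧ (y = U ∨ ∃ v ≤ k, y = Y v))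
    ⟨0, rfl, le_rfl, by omega, .inr ⟨0, le_rfl, rfl⟩⟩ (by
      rintro k - y x y' ⟨a, rfl, hka, ham, hy⟩ hR hS
      cases x <;> cases y' <;> rcases hy with rfl | ⟨v, hv, rfl⟩ <;>
        simp [frame, S, R, extraS] at hR hS ⊢ <;> omega) h
  obtain ⟨a, rfl, hna, ham, rfl | ⟨v, hv, rfl⟩⟩ := key
  · simp [R] at hu
  · simp only [R] at hu
    omega

theorem eq_U_of_Bq_U {n : ℕ} {x' x0 y' : World} (h : Bq (frame m) n x' x0 U y') : y' = U :=
  Bq.induction_on (F := frame m) (fun _ _ y => y = U) rfl (by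
    rintro - - - x y' rfl - hS
    cases x <;> cases y' <;> simp [frame, S, R, extraS] at hS ⊢) h

theorem S_of_Bq_of_ne {n : ℕ} (hnm : n ≠ m) {x' x0 y0 y' u : World}
    (h : Bq (frame m) n x' x0 y0 y') (hu : R m y' u) : S m x0 y0 u := by
  have h00 : R m x0 y0 := h.rel_inner
  rcases R_or_eq_U_of_Bq h hu with hy0u | rfl
  · exact (frame m).R_sub_S h00 hy0u
  refine ⟨h00, ?_, .inr (.inr (.inl rfl))⟩
  have hy0 : y0 ≠ U := by
    rintro rfl
    cases eq_U_of_Bq_U h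
    simp [R] at hu
  obtain ⟨t, rfl⟩ : ∃ t, x0 = X t := by cases x0 <;> cases y0 <;> simp_all [R]
  rcases Nat.eq_zero_or_pos t with rfl | ht
  · obtain rfl : y0 = Y 0 := by cases y0 <;> simp_all [R]
    exact absurd (eq_of_Bq_X_zero h hu) hnm
  · cases y0 <;> simp [R] at h00 ⊢ <;> omega

theorem FbroadCond_of_ne {n : ℕ} (hnm : n ≠ m) : FbroadCond (frame m) n :=
  fun _ _ _ _ h _ hu => S_of_Bq_of_ne hnm h hu

-- `A`, `B`, `C` and `D (k+1)` of `R^m` are the variables `0`, `1`, `2` and `k+3`.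
def val (m : ℕ) : ℕ → World → Prop
  | 0 => (· = Y m)
  | 1 => (· = Y (m+1))
  | 2 => (· ≠ U)
  | k+3 => (· = Y k)

theorem val_two_add_succ (i : ℕ) : val m (2 + (i+1)) = (· = Y i) := by
  rw [show 2 + (i+1) = i+3 by omega]
  rfl

theorem force_rhd_X {V : ℕ → World → Prop} {a b j : ℕ} (hj : j ≤ m)
    (ha : ∀ w, V a w → w = Y j) (hb : V b (Y (j+1))) :
    force (frame m) V (.var a ▷ .var b) (X (j+1)) := by
  intro v _ hv
  obtain rfl := ha v hv
  exact ⟨_, S_exc hj, hb⟩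

theorem force_not_rhd_X_zero {d : ℕ} (hd : val m d (Y 0)) :
    force (frame m) (val m) (∼(.var d ▷ ∼(.var 2))) (X 0) := by
  intro h
  obtain ⟨u, hs, hu⟩ := h (Y 0) (by simp [frame, R]) hd
  obtain rfl : u = U := not_not.1 hu
  exact Nat.not_succ_le_zero 0 hs.2.1.1

theorem force_Ubr : ∀ j ≤ m,
    force (frame m) (val m) (Ubr (.var 2) (fun i => .var (2+i)) (j+1)) (X (j+1))
  | 0, _ => force_dia.2 ⟨X 0, by simp [frame, R], force_not_rhd_X_zero rfl⟩
  | t+1, ht => force_dia.2 ⟨X (t+1), by simp [frame, R]; omega, force_conj.2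
      ⟨force_rhd_X (by omega) (by rw [val_two_add_succ]; exact fun _ h => h)
        (by rw [val_two_add_succ]), force_Ubr t (by omega)⟩⟩

theorem not_force_rhd_B_and_box_C {P : ILForm} {w v : World} (hwv : R m w v)
    (hv : force (frame m) (val m) P v) :
    ¬ force (frame m) (val m) (P ▷ (.var 1 ⋀ □(.var 2))) w := by
  intro h
  obtain ⟨u, -, hu⟩ := h v hwv hv
  obtain ⟨rfl, hC⟩ := force_conj.1 hu
  exact hC U rfl rfl

theorem not_valid_Rbroad :
    ¬ valid (frame m) (Rbroad (.var 0) (.var 1) (.var 2) (fun i => .var (2+i)) m) := by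
  intro h
  have hAB : force (frame m) (val m) (.var 0 ▷ .var 1) (X (m+1)) :=
    force_rhd_X le_rfl (fun _ h => h) rfl
  cases m with
  | zero =>
      exact not_force_rhd_B_and_box_C (by simp [R]) (force_not_rhd_X_zero (d := 0) rfl) (h _ _ hAB)
  | succ k =>
      refine not_force_rhd_B_and_box_C (v := X (k+1)) (by simp [R]) (force_conj.2 ⟨?_, ?_⟩)
        (h _ _ hAB)
      · exact force_Ubr k (by omega)
      · exact force_rhd_X (by omega) (by rw [val_two_add_succ]; exact fun _ h => h) rfl

end SepFrame

/-- for `n ≠ m` there is a Veltman frame satisfying `F^n` but not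
`F^m`; consequently `IL + R^n` does not derive `R^m`. -/
theorem stmt16 (n m : ℕ) (hnm : n ≠ m) :
    (∃ F : Veltman, FbroadCond F n ∧ ¬ FbroadCond F m) ∧
    ¬ ILProv
        (instancesOf (Rbroad (ILForm.var 0) (ILForm.var 1) (ILForm.var 2)
          (fun i => ILForm.var (2+i)) n))
        (Rbroad (ILForm.var 0) (ILForm.var 1) (ILForm.var 2)
          (fun i => ILForm.var (2+i)) m) := by
  have hFn := SepFrame.FbroadCond_of_ne hnm
  refine ⟨⟨SepFrame.frame m, hFn, SepFrame.not_FbroadCond_self⟩, fun hprov => ?_⟩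
  exact SepFrame.not_valid_Rbroad <| valid_of_ILProv hprov fun _ hB =>
    valid_of_mem_instancesOf (valid_Rbroad hFn _ _ _ _) hB
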